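/- If α, β ∈ ℂ satisfy |α|² + |β|² = 1, then for every p ∈ ℝ the pairing of the superqubit bra ψ† p α β with the superqubit ket ψ p α β equals 1 in Λ; i.e. every superqubit is normalized. -/
import Mathlib


noncomputable section

abbrev Λ : Type := ExteriorAlgebra ℂ (Fin 2 → ℂ)

def η : Λ := ExteriorAlgebra.ι ℂ (Pi.single 0 1)

def η' : Λ := ExteriorAlgebra.ι ℂ (Pi.single 1 1)

def E : Λ := η * η'

/-- The superqubit ket `ψ p α β`. -/
def ψ (p : ℝ) (α β : ℂ) : Fin 3 → Λ :=
  ![α • (1 + ((p ^ 2 / 2 : ℝ) : ℂ) • E),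
    β • (1 + ((p ^ 2 / 2 : ℝ) : ℂ) • E),
    (p : ℂ) • (α • η - β • η')]

/-- The superqubit bra `ψ† p α β`. -/
def ψbra (p : ℝ) (α β : ℂ) : Fin 3 → Λ :=
  ![(starRingEnd ℂ α) • (1 + ((p ^ 2 / 2 : ℝ) : ℂ) • E),
    (starRingEnd ℂ β) • (1 + ((p ^ 2 / 2 : ℝ) : ℂ) • E),
    (p : ℂ) • ((starRingEnd ℂ α) • η' + (starRingEnd ℂ β) • η)]

lemma hηη : η * η = 0 := ExteriorAlgebra.ι_sq_zero _
lemma hη'η' : η' * η' = 0 := ExteriorAlgebra.ι_sq_zero _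
lemma hswap : η' * η = -(η * η') := by
  have := ExteriorAlgebra.ι_add_mul_swap (R := ℂ)
    (Pi.single 0 1 : Fin 2 → ℂ) (Pi.single 1 1)
  rw [← η, ← η'] at this
  exact eq_neg_of_add_eq_zero_right this

lemma hEE : E * E = 0 := by
  have : E * E = η * (η' * η) * η' := by rw [E]; noncomm_ring
  rw [this, hswap]
  rw [mul_neg, ← mul_assoc, hηη]
  simp

theorem superqubit_normalized (α β : ℂ)
    (h : Complex.normSq α + Complex.normSq β = 1) (p : ℝ) :
    ∑ i : Fin 3, ψbra p α β i * ψ p α β i = 1 := by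
  have hα : (starRingEnd ℂ α) * α = (Complex.normSq α : ℂ) :=
    (Complex.normSq_eq_conj_mul_self).symm
  have hβ : (starRingEnd ℂ β) * β = (Complex.normSq β : ℂ) :=
    (Complex.normSq_eq_conj_mul_self).symm
  simp only [ψ, ψbra, Fin.sum_univ_three, Matrix.cons_val_zero, Matrix.cons_val_one,
    Matrix.head_cons, Matrix.cons_val_two, Matrix.tail_cons]
  simp only [smul_mul_smul_comm, mul_add, add_mul, sub_mul, mul_sub, smul_add, smul_sub,
    mul_one, one_mul, smul_smul, mul_smul_comm, smul_mul_assoc]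
  rw [hηη, hη'η', hswap, hEE, ← E]
  simp only [smul_zero, smul_neg]
  have h1 : ((Complex.normSq α : ℂ) + (Complex.normSq β : ℂ)) = 1 := by
    exact_mod_cast h
  match_scalars <;> push_cast <;>
    first
    | linear_combination hα + hβ + h1
    | ring
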